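/- Consider sequences (z_k) in ℝⁿ, time-varying nonempty closed convex sets Y_k ⊆ ℝⁿ, maps Φ_k : ℝⁿ → ℝⁿ each strongly monotone with constant η > 0 and Lipschitz with constant L, and points z*_k ∈ Y_k which are fixed points: z*_k = proj_{Y_k}(z*_k − αΦ_k(z*_k)). Suppose the iteration z_{k+1} = proj_{Y_k}(z_k − α(Φ_k(z_k) + e_k)) is run with perturbations ‖e_k‖ ≤ E and the optimizers drift slowly: ‖z*_{k+1} − z*_k‖ ≤ σ for all k. If 0 < α < 2η/L², then with ρ := √(1 − 2αη + α²L²) < 1, one has ‖z_k − z*_k‖ ≤ ρ^k‖z_0 − z*_0‖ + (1 − ρ^k)/(1 − ρ)·(αE + σ) for all k ≥ 0. -/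

import Mathlib

/-- `p` is a metric projection (nearest point) of `x` onto `Y`. -/
def IsProjOn {E : Type*} [NormedAddCommGroup E] (Y : Set E) (x p : E) : Prop :=
  p ∈ Y ∧ ∀ y ∈ Y, ‖x - p‖ ≤ ‖x - y‖

/-!
The forward step `w ↦ w - α (Φ w - Φ z⋆)` of a strongly monotone, Lipschitz map contracts
distances to `z⋆` by `ρ = √(1 - 2αη + α²L²)`, obtained by expanding the square and bounding the
cross term by strong monotonicity and the quadratic term by the Lipschitz bound. The metric
projection is non-expansive and fixes `z⋆`, so one iteration gives
`‖z_{k+1} - z⋆_k‖ ≤ ρ ‖z_k - z⋆_k‖ + α E`, and the drift costs another `σ`. Unrolling the linear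
recursion `a_{k+1} ≤ ρ a_k + (α E + σ)` yields the geometric bound.
-/

open Real
open scoped InnerProductSpace

section Projection

variable {F : Type*} [NormedAddCommGroup F] [InnerProductSpace ℝ F] {K : Set F} {x y p q : F}

theorem IsProjOn.real_inner_le_zero (hK : Convex ℝ K) (h : IsProjOn K x p) :
    ∀ w ∈ K, ⟪x - p, w - p⟫_ℝ ≤ 0 := by
  obtain ⟨hp, hmin⟩ := h
  have : Nonempty K := ⟨⟨p, hp⟩⟩
  rw [← norm_eq_iInf_iff_real_inner_le_zero hK hp]
  refine le_antisymm (le_ciInf fun w => hmin w w.2) ?_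
  exact ciInf_le ⟨0, fun _ ⟨_, h⟩ => h ▸ norm_nonneg _⟩ (⟨p, hp⟩ : K)

theorem IsProjOn.norm_sub_le (hK : Convex ℝ K) (hx : IsProjOn K x p) (hy : IsProjOn K y q) :
    ‖p - q‖ ≤ ‖x - y‖ := by
  have hp := hx.real_inner_le_zero hK q hy.1
  have hq := hy.real_inner_le_zero hK p hx.1
  -- Adding the two variational inequalities gives `‖p - q‖² ≤ ⟪x - y, p - q⟫`.
  have key : ‖p - q‖ ^ 2 ≤ ⟪x - y, p - q⟫_ℝ := by
    have : ⟪x - y, p - q⟫_ℝ - ‖p - q‖ ^ 2 = -⟪x - p, q - p⟫_ℝ - ⟪y - q, p - q⟫_ℝ := by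
      rw [← real_inner_self_eq_norm_sq]
      simp only [inner_sub_left, inner_sub_right]
      ring
    linarith
  have hcs := real_inner_le_norm (x - y) (p - q)
  nlinarith [norm_nonneg (p - q), norm_nonneg (x - y)]

end Projection

section ForwardStep

variable {F : Type*} [NormedAddCommGroup F] [InnerProductSpace ℝ F]

theorem norm_sub_smul_sub_le_of_strongMonotone {f : F → F} {η L α : ℝ} (hα : 0 ≤ α)
    (hmono : ∀ x y, η * ‖x - y‖ ^ 2 ≤ ⟪f x - f y, x - y⟫_ℝ)
    (hlip : ∀ x y, ‖f x - f y‖ ≤ L * ‖x - y‖) (x y : F) :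
    ‖(x - y) - α • (f x - f y)‖ ≤ √(1 - 2 * α * η + α ^ 2 * L ^ 2) * ‖x - y‖ := by
  set w := x - y
  set Δ := f x - f y
  have hexpand : ‖w - α • Δ‖ ^ 2 = ‖w‖ ^ 2 - 2 * α * ⟪Δ, w⟫_ℝ + α ^ 2 * ‖Δ‖ ^ 2 := by
    rw [← real_inner_self_eq_norm_sq, ← real_inner_self_eq_norm_sq, ← real_inner_self_eq_norm_sq]
    simp only [inner_sub_left, inner_sub_right, real_inner_smul_left, real_inner_smul_right]
    rw [real_inner_comm Δ w]
    ring
  have hΔ : ‖Δ‖ ^ 2 ≤ L ^ 2 * ‖w‖ ^ 2 := by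
    rw [← mul_pow]
    exact pow_le_pow_left₀ (norm_nonneg _) (hlip x y) 2
  have hsq : ‖w - α • Δ‖ ^ 2 ≤ (1 - 2 * α * η + α ^ 2 * L ^ 2) * ‖w‖ ^ 2 := by
    nlinarith [hmono x y, sq_nonneg α]
  calc ‖w - α • Δ‖ = √(‖w - α • Δ‖ ^ 2) := (sqrt_sq (norm_nonneg _)).symm
    _ ≤ √((1 - 2 * α * η + α ^ 2 * L ^ 2) * ‖w‖ ^ 2) := sqrt_le_sqrt hsq
    _ = √(1 - 2 * α * η + α ^ 2 * L ^ 2) * ‖w‖ := by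
      rw [sqrt_mul' _ (sq_nonneg _), sqrt_sq (norm_nonneg _)]

theorem IsProjOn.norm_sub_le_of_inexact_step {K : Set F} (hK : Convex ℝ K) {f : F → F}
    {η L α : ℝ} (hα : 0 ≤ α) (hmono : ∀ x y, η * ‖x - y‖ ^ 2 ≤ ⟪f x - f y, x - y⟫_ℝ)
    (hlip : ∀ x y, ‖f x - f y‖ ≤ L * ‖x - y‖) {x e p zs : F}
    (hp : IsProjOn K (x - α • (f x + e)) p) (hzs : IsProjOn K (zs - α • f zs) zs) :
    ‖p - zs‖ ≤ √(1 - 2 * α * η + α ^ 2 * L ^ 2) * ‖x - zs‖ + α * ‖e‖ := by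
  have hsplit : (x - α • (f x + e)) - (zs - α • f zs)
      = ((x - zs) - α • (f x - f zs)) - α • e := by
    simp only [smul_add, smul_sub]; abel
  calc ‖p - zs‖ ≤ ‖(x - α • (f x + e)) - (zs - α • f zs)‖ := hp.norm_sub_le hK hzs
    _ ≤ ‖(x - zs) - α • (f x - f zs)‖ + ‖α • e‖ := hsplit ▸ _root_.norm_sub_le _ _
    _ ≤ √(1 - 2 * α * η + α ^ 2 * L ^ 2) * ‖x - zs‖ + α * ‖e‖ := by
      rw [norm_smul, norm_of_nonneg hα]
      gcongr
      exact norm_sub_smul_sub_le_of_strongMonotone hα hmono hlip x zs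

end ForwardStep

theorem sqrt_one_sub_two_mul_add_sq_lt_one {η L α : ℝ} (hα0 : 0 < α) (hα : α < 2 * η / L ^ 2) :
    √(1 - 2 * α * η + α ^ 2 * L ^ 2) < 1 := by
  have hL : L ^ 2 ≠ 0 := by
    intro h
    rw [h, div_zero] at hα
    linarith
  have hαL : α * L ^ 2 < 2 * η := (lt_div_iff₀ (by positivity)).mp hα
  rw [sqrt_lt' one_pos]
  nlinarith

theorem le_pow_mul_add_geom_of_le_mul_add {a : ℕ → ℝ} {ρ c : ℝ} (hρ0 : 0 ≤ ρ) (hρ1 : ρ ≠ 1)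
    (h : ∀ k, a (k + 1) ≤ ρ * a k + c) (k : ℕ) :
    a k ≤ ρ ^ k * a 0 + (1 - ρ ^ k) / (1 - ρ) * c := by
  induction k with
  | zero => simp
  | succ k ih =>
    have hρ : 1 - ρ ≠ 0 := sub_ne_zero.mpr hρ1.symm
    calc a (k + 1) ≤ ρ * a k + c := h k
      _ ≤ ρ * (ρ ^ k * a 0 + (1 - ρ ^ k) / (1 - ρ) * c) + c := by gcongr
      _ = ρ ^ (k + 1) * a 0 + (1 - ρ ^ (k + 1)) / (1 - ρ) * c := by
        field_simp
        ring

theorem stmt_4_general (n : ℕ) (Y : ℕ → Set (EuclideanSpace ℝ (Fin n)))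
    (hYcv : ∀ k, Convex ℝ (Y k))
    (Φ : ℕ → EuclideanSpace ℝ (Fin n) → EuclideanSpace ℝ (Fin n))
    (η L α E σ : ℝ)
    (hmono : ∀ k x y, η * ‖x - y‖ ^ 2 ≤ (inner ℝ (Φ k x - Φ k y) (x - y) : ℝ))
    (hlip : ∀ k x y, ‖Φ k x - Φ k y‖ ≤ L * ‖x - y‖)
    (proj : ℕ → EuclideanSpace ℝ (Fin n) → EuclideanSpace ℝ (Fin n))
    (hproj : ∀ k x, IsProjOn (Y k) x (proj k x))
    (zstar : ℕ → EuclideanSpace ℝ (Fin n))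
    (hfix : ∀ k, proj k (zstar k - α • Φ k (zstar k)) = zstar k)
    (z e : ℕ → EuclideanSpace ℝ (Fin n))
    (hiter : ∀ k, z (k + 1) = proj k (z k - α • (Φ k (z k) + e k)))
    (herr : ∀ k, ‖e k‖ ≤ E)
    (hdrift : ∀ k, ‖zstar (k + 1) - zstar k‖ ≤ σ)
    (hα0 : 0 < α) (hα : α < 2 * η / L ^ 2) :
    Real.sqrt (1 - 2 * α * η + α ^ 2 * L ^ 2) < 1 ∧
    ∀ k, ‖z k - zstar k‖ ≤
      Real.sqrt (1 - 2 * α * η + α ^ 2 * L ^ 2) ^ k * ‖z 0 - zstar 0‖ +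
      (1 - Real.sqrt (1 - 2 * α * η + α ^ 2 * L ^ 2) ^ k) /
        (1 - Real.sqrt (1 - 2 * α * η + α ^ 2 * L ^ 2)) * (α * E + σ) := by
  set ρ := √(1 - 2 * α * η + α ^ 2 * L ^ 2)
  have hρ1 : ρ < 1 := sqrt_one_sub_two_mul_add_sq_lt_one hα0 hα
  refine ⟨hρ1, le_pow_mul_add_geom_of_le_mul_add (sqrt_nonneg _) hρ1.ne fun k => ?_⟩
  have hstep : ‖z (k + 1) - zstar k‖ ≤ ρ * ‖z k - zstar k‖ + α * ‖e k‖ := by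
    have hzs := hproj k (zstar k - α • Φ k (zstar k))
    rw [hfix k] at hzs
    exact hiter k ▸ (hproj k _).norm_sub_le_of_inexact_step (hYcv k) hα0.le (hmono k) (hlip k) hzs
  calc ‖z (k + 1) - zstar (k + 1)‖
      ≤ ‖z (k + 1) - zstar k‖ + ‖zstar k - zstar (k + 1)‖ := norm_sub_le_norm_sub_add_norm_sub ..
    _ ≤ ρ * ‖z k - zstar k‖ + (α * E + σ) := by
      rw [norm_sub_rev (zstar k)]
      linarith [mul_le_mul_of_nonneg_left (herr k) hα0.le, hdrift k]

theorem stmt_4 (n : ℕ) (Y : ℕ → Set (EuclideanSpace ℝ (Fin n)))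
    (hYne : ∀ k, (Y k).Nonempty) (hYcl : ∀ k, IsClosed (Y k)) (hYcv : ∀ k, Convex ℝ (Y k))
    (Φ : ℕ → EuclideanSpace ℝ (Fin n) → EuclideanSpace ℝ (Fin n))
    (η L α E σ : ℝ) (hη : 0 < η)
    (hmono : ∀ k x y, η * ‖x - y‖ ^ 2 ≤ (inner ℝ (Φ k x - Φ k y) (x - y) : ℝ))
    (hlip : ∀ k x y, ‖Φ k x - Φ k y‖ ≤ L * ‖x - y‖)
    (proj : ℕ → EuclideanSpace ℝ (Fin n) → EuclideanSpace ℝ (Fin n))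
    (hproj : ∀ k x, IsProjOn (Y k) x (proj k x))
    (zstar : ℕ → EuclideanSpace ℝ (Fin n)) (hzY : ∀ k, zstar k ∈ Y k)
    (hfix : ∀ k, proj k (zstar k - α • Φ k (zstar k)) = zstar k)
    (z e : ℕ → EuclideanSpace ℝ (Fin n))
    (hiter : ∀ k, z (k + 1) = proj k (z k - α • (Φ k (z k) + e k)))
    (herr : ∀ k, ‖e k‖ ≤ E)
    (hdrift : ∀ k, ‖zstar (k + 1) - zstar k‖ ≤ σ)
    (hα0 : 0 < α) (hα : α < 2 * η / L ^ 2) :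
    Real.sqrt (1 - 2 * α * η + α ^ 2 * L ^ 2) < 1 ∧
    ∀ k, ‖z k - zstar k‖ ≤
      Real.sqrt (1 - 2 * α * η + α ^ 2 * L ^ 2) ^ k * ‖z 0 - zstar 0‖ +
      (1 - Real.sqrt (1 - 2 * α * η + α ^ 2 * L ^ 2) ^ k) /
        (1 - Real.sqrt (1 - 2 * α * η + α ^ 2 * L ^ 2)) * (α * E + σ) :=
  stmt_4_general n Y hYcv Φ η L α E σ hmono hlip proj hproj zstar hfix z e hiter herr hdrift hα0 hα
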